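/- arXiv:1212.6213 — 2 statements merged into one kernel-verified Lean document; each statement's English description precedes it below -/
import Mathlib

section
/- Let (K, v) be a valued field of characteristic p > 0 with value group Γ, and suppose the Artin-Schreier map ℘(x) = x^p − x has image of finite index in the additive group (K, +). Then Γ is p-divisible. -/
section Aux

variable {K : Type*} [Field K] (p : ℕ) [Fact p.Prime] [CharP K p]
    {Γ : Type*} [LinearOrderedCommGroupWithZero Γ] (v : Valuation K Γ)

private lemma aux_not_pow {γ : Γ} (hγ1 : 1 < γ) (hnp : ∀ δ : Γ, δ ^ p ≠ γ) (n : ℕ) :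
    ∀ δ : Γ, δ ^ p ≠ γ ^ (1 + p * n) := by
  intro δ hδ
  have hγ0 : γ ≠ 0 := ne_of_gt (lt_trans zero_lt_one hγ1)
  apply hnp (δ / γ ^ n)
  have : γ ^ (1 + p * n) = γ * (γ ^ n) ^ p := by
    rw [pow_add, pow_one, ← pow_mul, mul_comm p n]
  rw [div_pow, hδ, this, mul_div_assoc]
  field_simp

private lemma aux_false {γ : Γ} (hγ1 : 1 < γ) (hnp : ∀ δ : Γ, δ ^ p ≠ γ)
    (hsurj : ∀ γ : Γ, γ ≠ 0 → ∃ x : K, v x = γ)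
    (hfin : (((frobenius K p).toAddMonoidHom - AddMonoidHom.id K).range).FiniteIndex) :
    False := by
  have hγ0 : γ ≠ 0 := ne_of_gt (lt_trans zero_lt_one hγ1)
  set H := ((frobenius K p).toAddMonoidHom - AddMonoidHom.id K).range with hH
  haveI : H.FiniteIndex := hfin
  -- choose elements with valuation γ ^ (1 + p*n)
  have hx : ∀ n : ℕ, ∃ x : K, v x = γ ^ (1 + p * n) := fun n =>
    hsurj _ (pow_ne_zero _ hγ0)
  choose x hxv using hx
  have hp1 : 1 < p := (Fact.out : p.Prime).one_lt
  -- two distinct n's map to the same coset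
  obtain ⟨m, n, hmn, heq⟩ := Finite.exists_ne_map_eq_of_infinite
    (fun n : ℕ => QuotientAddGroup.mk (s := H) (x n))
  -- WLOG m < n
  wlog hlt : m < n generalizing m n
  · exact this n m hmn.symm heq.symm (hmn.lt_or_gt.resolve_left hlt)
  have hmem : x n - x m ∈ H := by
    have := QuotientAddGroup.eq.mp heq
    rwa [neg_add_eq_sub] at this
  obtain ⟨z, hz⟩ := hmem
  have hzval : (frobenius K p).toAddMonoidHom z - AddMonoidHom.id K z = z ^ p - z := rfl
  rw [AddMonoidHom.sub_apply] at hz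
  have hz' : z ^ p - z = x n - x m := hz
  -- valuation of x n - x m
  have hvm : v (x m) < v (x n) := by
    rw [hxv, hxv]
    refine pow_lt_pow_right₀ hγ1 ?_
    have : p * m < p * n := Nat.mul_lt_mul_of_pos_left hlt (by omega)
    omega
  have hvsub : v (x n - x m) = γ ^ (1 + p * n) := by
    rw [Valuation.map_sub_eq_of_lt_left v hvm, hxv]
  have hvgt1 : 1 < v (x n - x m) := by
    rw [hvsub]; exact one_lt_pow₀ hγ1 (by omega)
  -- case on v z
  rcases le_or_gt (v z) 1 with hle | hgt
  · have : v (z ^ p - z) ≤ 1 := by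
      apply Valuation.map_sub_le
      · rw [map_pow]; exact pow_le_one₀ (zero_le') hle
      · exact hle
    rw [hz'] at this
    exact absurd (lt_of_lt_of_le hvgt1 this) (lt_irrefl _)
  · have hvz : v z < v (z ^ p) := by
      rw [map_pow]
      calc v z = v z ^ 1 := (pow_one _).symm
        _ < v z ^ p := pow_lt_pow_right₀ hgt hp1
    have : v (z ^ p - z) = v z ^ p := by
      rw [Valuation.map_sub_eq_of_lt_left v hvz, map_pow]
    rw [hz', hvsub] at this
    exact aux_not_pow p hγ1 hnp n (v z) this.symm

end Aux

/-- If `(K, v)` is a valued field of characteristic `p > 0` (with value group `Γ`, the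
valuation being surjective onto the nonzero elements of `Γ`) such that the image of the
Artin-Schreier map `℘(x) = x^p - x` has finite index in `(K, +)`, then the value group
is `p`-divisible. Here `Γ` is written multiplicatively, so additive "`p`-divisible"
becomes: every nonzero `γ` is a `p`-th power. -/
theorem stmt_3 {K : Type*} [Field K] (p : ℕ) [Fact p.Prime] [CharP K p]
    {Γ : Type*} [LinearOrderedCommGroupWithZero Γ] (v : Valuation K Γ)
    (hsurj : ∀ γ : Γ, γ ≠ 0 → ∃ x : K, v x = γ)
    (hfin : (((frobenius K p).toAddMonoidHom - AddMonoidHom.id K).range).FiniteIndex) :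
    ∀ γ : Γ, γ ≠ 0 → ∃ δ : Γ, δ ^ p = γ := by
  intro γ hγ0
  by_contra hnp
  push_neg at hnp
  rcases lt_trichotomy γ 1 with hlt | heq | hgt
  · have hinv : 1 < γ⁻¹ :=
      (one_lt_inv₀ (lt_of_le_of_ne zero_le' (Ne.symm hγ0))).mpr hlt
    refine aux_false p v hinv ?_ hsurj hfin
    intro δ hδ
    exact hnp δ⁻¹ (by rw [inv_pow, hδ, inv_inv])
  · exact hnp 1 (by rw [one_pow, heq])
  · exact aux_false p v hgt hnp hsurj hfin
end

section
/- Let K be a field of characteristic p > 0 and suppose [K : ℘(K)] < ∞, where ℘(x) = x^p − x and the index is as additive groups. Then K has only finitely many Artin-Schreier extensions inside a fixed algebraic closure; conversely, if K has only finitely many Artin-Schreier extensions, then [K : ℘(K)] < ∞. -/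
/-!
Write `℘(x) = x ^ p - x`. It is additive, and two solutions of `℘(x) = a` differ by an element of
`𝔽_p`, so `a ↦ K(α)` with `℘(α) = a` is well defined on `K ⧸ ℘(K)`; its image is the set of
Artin-Schreier extensions together with `K`.

It remains to see that its fibres are finite. If `α ∉ K`, every conjugate of `α` is `α + i` with
`i ∈ 𝔽_p`, so the sum of the `d` conjugates is `d • α` plus an element of `K`; as it lies in `K`,
`p ∣ d`. Hence `X ^ p - X - a` is the minimal polynomial of `α`, and `α ↦ α + 1` defines a
`K`-endomorphism `σ ≠ id` of `K(α)`. If `β ∈ K(α)` and `℘(β) = b`, then `σ β - β = n ∈ 𝔽_p`, so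
`β - n • α` is fixed by `σ`; as `[K(α) : K] = p` is prime, it lies in `K`, and applying `℘` gives
`b ≡ n • a` mod `℘(K)`. So each fibre lies in a cyclic subgroup of `K ⧸ ℘(K)`, which is killed
by `p`.
-/

open Polynomial IntermediateField

section ArtinSchreierMap

variable (R : Type*) [CommRing R] (p : ℕ) [ExpChar R p]

def artinSchreier : R →+ R := (frobenius R p).toAddMonoidHom - AddMonoidHom.id R

variable {R p}

@[simp] lemma artinSchreier_apply (x : R) : artinSchreier R p x = x ^ p - x := rfl

lemma map_artinSchreier {S : Type*} [CommRing S] [ExpChar S p] (f : R →+* S) (x : R) :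
    f (artinSchreier R p x) = artinSchreier S p (f x) := by
  simp

end ArtinSchreierMap

section ArtinSchreierExtensions

variable {K Ω : Type*} [Field K] [Field Ω] [Algebra K Ω] {p : ℕ} [Fact p.Prime]

lemma exists_intCast_eq_sub_of_artinSchreier_eq {F : Type*} [Field F] [CharP F p] {x y : F}
    (h : artinSchreier F p x = artinSchreier F p y) : ∃ n : ℤ, (n : F) = x - y := by
  have hfix : (x - y) ^ p = x - y := by
    rw [sub_pow_char]
    simp only [artinSchreier_apply] at h
    linear_combination h
  exact (mem_bot_iff_intCast p F).1 ((Subfield.mem_bot_iff_pow_eq_self F p).2 hfix)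

lemma sub_mem_bot_of_artinSchreier_eq [CharP Ω p] {α β : Ω}
    (h : artinSchreier Ω p α = artinSchreier Ω p β) : α - β ∈ (⊥ : IntermediateField K Ω) := by
  obtain ⟨n, hn⟩ := exists_intCast_eq_sub_of_artinSchreier_eq h
  exact hn ▸ intCast_mem ⊥ n

lemma sub_mem_bot_of_sub_mem_range_artinSchreier [CharP K p] [CharP Ω p] {α β : Ω} {a b : K}
    (ha : artinSchreier Ω p α = algebraMap K Ω a) (hb : artinSchreier Ω p β = algebraMap K Ω b)
    (hab : b - a ∈ (artinSchreier K p).range) : β - α ∈ (⊥ : IntermediateField K Ω) := by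
  obtain ⟨k, hk⟩ := hab
  have hshift : artinSchreier Ω p (β - algebraMap K Ω k) = artinSchreier Ω p α := by
    rw [map_sub, ← map_artinSchreier, hk, hb, ha, map_sub, sub_sub_cancel]
  have := add_mem (sub_mem_bot_of_artinSchreier_eq hshift) (IntermediateField.algebraMap_mem ⊥ k)
  rwa [sub_right_comm, sub_add_cancel] at this

lemma adjoin_simple_eq_of_sub_mem_bot {α β : Ω} (h : α - β ∈ (⊥ : IntermediateField K Ω)) :
    K⟮α⟯ = K⟮β⟯ := by
  have key : ∀ {x y : Ω}, x - y ∈ (⊥ : IntermediateField K Ω) → K⟮x⟯ ≤ K⟮y⟯ := fun {x y} h =>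
    adjoin_simple_le_iff.2 <| by
      simpa using add_mem (bot_le (a := K⟮y⟯) h) (mem_adjoin_simple_self K y)
  exact le_antisymm (key h) (key (by simpa using neg_mem h))

lemma monic_X_pow_sub_X_sub_C (a : K) : (X ^ p - X - C a : K[X]).Monic := by
  rw [show (X ^ p - X - C a : K[X]) = X ^ p - (X + C a) by ring]
  exact monic_X_pow_sub (by rw [degree_X_add_C]; exact_mod_cast (Fact.out : p.Prime).one_lt)

lemma natDegree_X_pow_sub_X_sub_C (a : K) : (X ^ p - X - C a : K[X]).natDegree = p := by
  rw [show (X ^ p - X - C a : K[X]) = X ^ p - (X + C a) by ring,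
    natDegree_sub_eq_left_of_natDegree_lt, natDegree_X_pow]
  rw [natDegree_X_add_C, natDegree_X_pow]
  exact (Fact.out : p.Prime).one_lt

lemma aeval_X_pow_sub_X_sub_C [CharP Ω p] {a : K} {α : Ω} :
    aeval α (X ^ p - X - C a) = artinSchreier Ω p α - algebraMap K Ω a := by
  simp

lemma isIntegral_of_artinSchreier_eq [CharP Ω p] {α : Ω} {a : K}
    (ha : artinSchreier Ω p α = algebraMap K Ω a) : IsIntegral K α :=
  ⟨_, monic_X_pow_sub_X_sub_C a, by rw [← aeval_def, aeval_X_pow_sub_X_sub_C, ha, sub_self]⟩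

lemma exists_artinSchreier_eq_algebraMap [IsAlgClosed Ω] [CharP Ω p] (a : K) :
    ∃ α : Ω, artinSchreier Ω p α = algebraMap K Ω a := by
  obtain ⟨α, hα⟩ := IsAlgClosed.exists_aeval_eq_zero Ω (X ^ p - X - C a) (by
    rw [degree_eq_natDegree (monic_X_pow_sub_X_sub_C a).ne_zero, natDegree_X_pow_sub_X_sub_C]
    exact_mod_cast (Fact.out : p.Prime).ne_zero)
  rw [aeval_X_pow_sub_X_sub_C, sub_eq_zero] at hα
  exact ⟨α, hα⟩

lemma natDegree_minpoly_nsmul_mem_bot [IsAlgClosed Ω] {α : Ω} (hα : IsIntegral K α)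
    (h : ∀ γ ∈ (minpoly K α).aroots Ω, γ - α ∈ (⊥ : IntermediateField K Ω)) :
    (minpoly K α).natDegree • α ∈ (⊥ : IntermediateField K Ω) := by
  have hsplit : ((minpoly K α).map (algebraMap K Ω)).Splits := IsAlgClosed.splits _
  have hsum : ((minpoly K α).aroots Ω).sum ∈ (⊥ : IntermediateField K Ω) := by
    rw [← neg_neg ((minpoly K α).aroots Ω).sum, aroots_def,
      ← hsplit.nextCoeff_eq_neg_sum_roots_of_monic ((minpoly.monic hα).map _), nextCoeff_map_eq]
    exact neg_mem (IntermediateField.algebraMap_mem _ _)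
  have hcard : Multiset.card ((minpoly K α).aroots Ω) = (minpoly K α).natDegree := by
    rw [aroots_def, splits_iff_card_roots.1 hsplit, natDegree_map]
  have hdecomp : (minpoly K α).natDegree • α =
      ((minpoly K α).aroots Ω).sum - (((minpoly K α).aroots Ω).map (· - α)).sum := by
    rw [Multiset.sum_map_sub, Multiset.map_id', Multiset.map_const', Multiset.sum_replicate,
      hcard]
    abel
  rw [hdecomp]
  refine sub_mem hsum (multiset_sum_mem _ fun x hx => ?_)
  obtain ⟨γ, hγ, rfl⟩ := Multiset.mem_map.1 hx
  exact h γ hγ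

lemma minpoly_eq_X_pow_sub_X_sub_C [IsAlgClosed Ω] [CharP Ω p] {α : Ω} {a : K}
    (ha : artinSchreier Ω p α = algebraMap K Ω a) (hα : α ∉ (⊥ : IntermediateField K Ω)) :
    minpoly K α = X ^ p - X - C a := by
  have hint := isIntegral_of_artinSchreier_eq ha
  have hdvd := minpoly.dvd K α (by rw [aeval_X_pow_sub_X_sub_C, ha, sub_self])
  have hconj : ∀ γ ∈ (minpoly K α).aroots Ω, γ - α ∈ (⊥ : IntermediateField K Ω) := by
    intro γ hγ
    have hγ := aeval_eq_zero_of_dvd_aeval_eq_zero hdvd (mem_aroots.1 hγ).2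
    rw [aeval_X_pow_sub_X_sub_C, sub_eq_zero, ← ha] at hγ
    exact sub_mem_bot_of_artinSchreier_eq hγ
  refine (eq_of_monic_of_dvd_of_natDegree_le (minpoly.monic hint)
    (monic_X_pow_sub_X_sub_C a) hdvd ?_).symm
  rw [natDegree_X_pow_sub_X_sub_C]
  by_contra! hlt
  have hne : ((minpoly K α).natDegree : Ω) ≠ 0 := by
    rw [Ne, CharP.cast_eq_zero_iff Ω p]
    exact fun hp => (Nat.le_of_dvd (minpoly.natDegree_pos hint) hp).not_gt hlt
  apply hα
  simpa [hne, nsmul_eq_mul] using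
    mul_mem (inv_mem (IntermediateField.natCast_mem ⊥ (minpoly K α).natDegree))
      (natDegree_minpoly_nsmul_mem_bot hint hconj)

lemma exists_zsmul_sub_mem_bot_of_map_eq_add_one {L : Type*} [Field L] [Algebra K L] [CharP L p]
    (hL : (Module.finrank K L).Prime) (σ : L →ₐ[K] L) {g : L} (hg : σ g = g + 1) {β : L}
    (hβ : σ (artinSchreier L p β) = artinSchreier L p β) :
    ∃ n : ℤ, β - n • g ∈ (⊥ : Subalgebra K L) := by
  obtain ⟨n, hn⟩ := exists_intCast_eq_sub_of_artinSchreier_eq (p := p) (x := σ β) (y := β)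
    (by simpa using hβ)
  refine ⟨n, ?_⟩
  have hfix : β - n • g ∈ AlgHom.equalizer σ (AlgHom.id K L) := by
    rw [AlgHom.mem_equalizer, map_sub, map_zsmul, hg, eq_add_of_sub_eq' hn.symm]
    simp only [AlgHom.id_apply, zsmul_eq_mul]
    ring
  have hproper : AlgHom.equalizer σ (AlgHom.id K L) ≠ ⊤ := fun htop => by
    have : σ g = g := (AlgHom.mem_equalizer _ _ _).1 (htop ▸ Algebra.mem_top)
    simp [hg] at this
  have := Subalgebra.isSimpleOrder_of_finrank_prime K L hL
  rwa [(eq_bot_or_eq_top _).resolve_right hproper] at hfix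

lemma artinSchreier_gen [CharP Ω p] {α : Ω} {a : K}
    (ha : artinSchreier Ω p α = algebraMap K Ω a) :
    artinSchreier K⟮α⟯ p (AdjoinSimple.gen K α) = algebraMap K K⟮α⟯ a :=
  Subtype.ext ((map_artinSchreier K⟮α⟯.val.toRingHom _).trans ha)

lemma exists_algHom_gen_eq_add_one [IsAlgClosed Ω] [CharP Ω p] {α : Ω} {a : K}
    (ha : artinSchreier Ω p α = algebraMap K Ω a) (hα : α ∉ (⊥ : IntermediateField K Ω)) :
    ∃ σ : K⟮α⟯ →ₐ[K] K⟮α⟯, σ (AdjoinSimple.gen K α) = AdjoinSimple.gen K α + 1 := by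
  let pb := adjoin.powerBasis (isIntegral_of_artinSchreier_eq ha)
  have hroot : aeval (AdjoinSimple.gen K α + 1) (minpoly K pb.gen) = 0 := by
    rw [adjoin.powerBasis_gen, minpoly_gen, minpoly_eq_X_pow_sub_X_sub_C ha hα,
      aeval_X_pow_sub_X_sub_C, map_add, artinSchreier_gen ha]
    simp
  exact ⟨pb.lift _ hroot, by simpa [pb] using pb.lift_gen _ hroot⟩

lemma mem_range_artinSchreier_of_mem_bot [CharP K p] [CharP Ω p] {α : Ω} {a : K}
    (ha : artinSchreier Ω p α = algebraMap K Ω a) (hα : α ∈ (⊥ : IntermediateField K Ω)) :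
    a ∈ (artinSchreier K p).range := by
  obtain ⟨c, rfl⟩ := mem_bot.1 hα
  exact ⟨c, (algebraMap K Ω).injective (by rw [map_artinSchreier, ha])⟩

lemma exists_sub_zsmul_mem_range_artinSchreier_of_mem_adjoin [IsAlgClosed Ω] [CharP K p]
    [CharP Ω p] {α β : Ω} {a b : K} (ha : artinSchreier Ω p α = algebraMap K Ω a)
    (hb : artinSchreier Ω p β = algebraMap K Ω b) (hβ : β ∈ K⟮α⟯) :
    ∃ n : ℤ, b - n • a ∈ (artinSchreier K p).range := by
  by_cases hα : α ∈ (⊥ : IntermediateField K Ω)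
  · rw [adjoin_simple_eq_bot_iff.2 hα] at hβ
    exact ⟨0, by simpa using mem_range_artinSchreier_of_mem_bot hb hβ⟩
  obtain ⟨σ, hσ⟩ := exists_algHom_gen_eq_add_one ha hα
  have hdeg : Module.finrank K K⟮α⟯ = p := by
    rw [adjoin.finrank (isIntegral_of_artinSchreier_eq ha), minpoly_eq_X_pow_sub_X_sub_C ha hα,
      natDegree_X_pow_sub_X_sub_C]
  have hb' : artinSchreier K⟮α⟯ p ⟨β, hβ⟩ = algebraMap K K⟮α⟯ b :=
    Subtype.ext ((map_artinSchreier K⟮α⟯.val.toRingHom _).trans hb)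
  obtain ⟨n, c, hc⟩ := exists_zsmul_sub_mem_bot_of_map_eq_add_one (hdeg ▸ Fact.out) σ hσ
    (β := ⟨β, hβ⟩) (by rw [hb', AlgHom.commutes])
  refine ⟨n, c, (algebraMap K K⟮α⟯).injective ?_⟩
  rw [map_artinSchreier, show algebraMap K K⟮α⟯ c = _ from hc, map_sub, map_zsmul, hb',
    artinSchreier_gen ha, map_sub, map_zsmul]

variable (K Ω p) in
def artinSchreierExtensions : Set (IntermediateField K Ω) :=
  {L | ∃ α : Ω, α ∉ (⊥ : IntermediateField K Ω) ∧ α ^ p - α ∈ (⊥ : IntermediateField K Ω) ∧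
    L = K⟮α⟯}

variable [IsAlgClosed Ω] [CharP Ω p]

variable (Ω p) in
noncomputable def artinSchreierRoot (a : K) : Ω :=
  (exists_artinSchreier_eq_algebraMap (p := p) (Ω := Ω) a).choose

lemma artinSchreier_artinSchreierRoot (a : K) :
    artinSchreier Ω p (artinSchreierRoot Ω p a) = algebraMap K Ω a :=
  (exists_artinSchreier_eq_algebraMap a).choose_spec

variable [CharP K p]

variable (K Ω p) in
noncomputable def adjoinArtinSchreierRoot :
    K ⧸ (artinSchreier K p).range → IntermediateField K Ω :=
  Quotient.lift (fun a => K⟮artinSchreierRoot Ω p a⟯) fun a b h =>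
    (adjoin_simple_eq_of_sub_mem_bot (sub_mem_bot_of_sub_mem_range_artinSchreier
      (artinSchreier_artinSchreierRoot a) (artinSchreier_artinSchreierRoot b)
      (by simpa [sub_eq_neg_add] using QuotientAddGroup.leftRel_apply.1 h))).symm

lemma adjoinArtinSchreierRoot_mk (a : K) :
    adjoinArtinSchreierRoot K Ω p a = K⟮artinSchreierRoot Ω p a⟯ := rfl

lemma artinSchreierExtensions_subset_range :
    artinSchreierExtensions K Ω p ⊆ Set.range (adjoinArtinSchreierRoot K Ω p) := by
  rintro L ⟨α, -, hα, rfl⟩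
  obtain ⟨a, ha⟩ := mem_bot.1 hα
  rw [← artinSchreier_apply] at ha
  refine ⟨QuotientAddGroup.mk a, adjoin_simple_eq_of_sub_mem_bot ?_⟩
  exact sub_mem_bot_of_artinSchreier_eq ((artinSchreier_artinSchreierRoot a).trans ha)

lemma range_subset_insert_artinSchreierExtensions :
    Set.range (adjoinArtinSchreierRoot K Ω p) ⊆ insert ⊥ (artinSchreierExtensions K Ω p) := by
  rintro L ⟨x, rfl⟩
  obtain ⟨a, rfl⟩ := QuotientAddGroup.mk_surjective x
  by_cases hα : artinSchreierRoot Ω p a ∈ (⊥ : IntermediateField K Ω)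
  · exact Or.inl (adjoin_simple_eq_bot_iff.2 hα)
  · refine Or.inr ⟨_, hα, ?_, rfl⟩
    rw [← artinSchreier_apply, artinSchreier_artinSchreierRoot]
    exact IntermediateField.algebraMap_mem ⊥ a

lemma mem_zmultiples_of_adjoinArtinSchreierRoot_eq {x y : K ⧸ (artinSchreier K p).range}
    (h : adjoinArtinSchreierRoot K Ω p x = adjoinArtinSchreierRoot K Ω p y) :
    y ∈ AddSubgroup.zmultiples x := by
  obtain ⟨a, rfl⟩ := QuotientAddGroup.mk_surjective x
  obtain ⟨b, rfl⟩ := QuotientAddGroup.mk_surjective y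
  have hβ : artinSchreierRoot Ω p b ∈ K⟮artinSchreierRoot Ω p a⟯ := by
    rw [adjoinArtinSchreierRoot_mk, adjoinArtinSchreierRoot_mk] at h
    exact h ▸ mem_adjoin_simple_self K _
  obtain ⟨n, hn⟩ := exists_sub_zsmul_mem_range_artinSchreier_of_mem_adjoin
    (artinSchreier_artinSchreierRoot a) (artinSchreier_artinSchreierRoot b) hβ
  refine AddSubgroup.mem_zmultiples_iff.2 ⟨n, ?_⟩
  rw [← QuotientAddGroup.mk_zsmul, QuotientAddGroup.eq_iff_sub_mem]
  simpa using neg_mem hn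

lemma finite_preimage_adjoinArtinSchreierRoot (L : IntermediateField K Ω) :
    (adjoinArtinSchreierRoot K Ω p ⁻¹' {L}).Finite := by
  rcases (adjoinArtinSchreierRoot K Ω p ⁻¹' {L}).eq_empty_or_nonempty with h | ⟨x, hx⟩
  · simp [h]
  refine (finite_zmultiples.2 ?_).subset fun y hy =>
    mem_zmultiples_of_adjoinArtinSchreierRoot_eq (hx.trans hy.symm)
  refine isOfFinAddOrder_iff_nsmul_eq_zero.2 ⟨p, (Fact.out : p.Prime).pos, ?_⟩
  obtain ⟨a, rfl⟩ := QuotientAddGroup.mk_surjective x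
  rw [← QuotientAddGroup.mk_nsmul, nsmul_eq_mul, CharP.cast_eq_zero, zero_mul,
    QuotientAddGroup.mk_zero]

end ArtinSchreierExtensions

/-- Let `K` be a field of characteristic `p > 0` and `℘(x) = x^p - x`. Then
`[K : ℘(K)] < ∞` (as additive groups) if and only if `K` has only finitely many
Artin-Schreier extensions inside a fixed algebraic closure, i.e. intermediate fields
`L = K(α)` with `α ∉ K` and `α^p - α ∈ K`. -/
theorem stmt_16 (K : Type*) [Field K] (p : ℕ) [Fact p.Prime] [CharP K p] :
    ((frobenius K p).toAddMonoidHom - AddMonoidHom.id K).range.FiniteIndex ↔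
    {L : IntermediateField K (AlgebraicClosure K) |
      ∃ α : AlgebraicClosure K,
        α ∉ (⊥ : IntermediateField K (AlgebraicClosure K)) ∧
        α ^ p - α ∈ (⊥ : IntermediateField K (AlgebraicClosure K)) ∧
        L = IntermediateField.adjoin K {α}}.Finite := by
  change (artinSchreier K p).range.FiniteIndex ↔
    (artinSchreierExtensions K (AlgebraicClosure K) p).Finite
  rw [AddSubgroup.finiteIndex_iff_finite_quotient]
  constructor
  · intro _
    exact (Set.finite_range _).subset artinSchreierExtensions_subset_range
  · intro h
    rw [← Set.finite_univ_iff]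
    exact ((h.insert ⊥).preimage' fun L _ => finite_preimage_adjoinArtinSchreierRoot L).subset
      fun x _ => range_subset_insert_artinSchreierExtensions ⟨x, rfl⟩
end
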